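/- arXiv:2401.07549 — 5 statements merged into one kernel-verified Lean document; each statement's English description precedes it below -/
import Mathlib

section
/- Let X be a minimal Z^d subshift. Then for any n > 0 and any patterns u, v of support [0,n-1]^d in the language of X, E_X(u) ⊆ E_X(v) if and only if u = v. In particular distinct patterns of X have distinct (in fact incomparable) extender sets. -/
open Filter Topology

/-- Membership in the cube `[0,n-1]^d`. -/
def inCube (d n : ℕ) (p : Fin d → ℤ) : Prop := ∀ i, 0 ≤ p i ∧ p i < (n : ℤ)

instance (d n : ℕ) : DecidablePred (inCube d n) := fun _ => by
  unfold inCube; infer_instance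

/-- Glue the cube pattern `w` onto the completion `x` outside `[0,n-1]^d`. -/
def glueCube {A : Type*} {d : ℕ} (n : ℕ) (w x : (Fin d → ℤ) → A) :
    (Fin d → ℤ) → A :=
  fun p => if inCube d n p then w p else x p

/-- The extender set of a pattern of support `[0,n-1]^d`. -/
def extSetCube {A : Type*} {d : ℕ} (X : Set ((Fin d → ℤ) → A)) (n : ℕ)
    (w : (Fin d → ℤ) → A) : Set ((Fin d → ℤ) → A) :=
  {x | glueCube n w x ∈ X}

/-- The pattern `w` (restricted to `[0,n-1]^d`) appears in some configuration of `X`. -/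
def inLangCube {A : Type*} {d : ℕ} (X : Set ((Fin d → ℤ) → A)) (n : ℕ)
    (w : (Fin d → ℤ) → A) : Prop :=
  ∃ x ∈ X, ∃ t : Fin d → ℤ, ∀ p : Fin d → ℤ, inCube d n p → x (t + p) = w p

/-- The collection of extender sets of patterns of support `[0,n-1]^d`. -/
def extSetsCube {A : Type*} {d : ℕ} (X : Set ((Fin d → ℤ) → A)) (n : ℕ) :
    Set (Set ((Fin d → ℤ) → A)) :=
  {E | ∃ w : (Fin d → ℤ) → A, inLangCube X n w ∧ E = extSetCube X n w}

/-- A `ℤ^d`-subshift: a closed, shift-invariant subset of `A^(ℤ^d)`. -/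
def IsSubshiftCube {A : Type*} [TopologicalSpace A] {d : ℕ}
    (X : Set ((Fin d → ℤ) → A)) : Prop :=
  IsClosed X ∧ ∀ x ∈ X, ∀ t : Fin d → ℤ, (fun p => x (p + t)) ∈ X

/-- The sequence `n ↦ log |E_X(n)| / n^d` whose limit is the extender entropy. -/
noncomputable def extEntCube {A : Type*} {d : ℕ} (X : Set ((Fin d → ℤ) → A)) (n : ℕ) : ℝ :=
  Real.log ((extSetsCube X n).ncard) / (n : ℝ) ^ d

/-- A minimal subshift: a subshift containing no nonempty proper subshift. -/
def IsMinimalSubshift {A : Type*} [TopologicalSpace A] {d : ℕ}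
    (X : Set ((Fin d → ℤ) → A)) : Prop :=
  IsSubshiftCube X ∧ ∀ Y ⊆ X, IsSubshiftCube Y → Y.Nonempty → Y = X

open Polynomial in
/-- Key lemma: given a nonzero finitely-supported `F : ι → ℤ` placed at distinct
integer positions `μ`, there is a polynomial `Q` whose correlation with `F` is a
positive constant, independent of the translate `s`. -/
lemma key_poly {ι : Type*} [Fintype ι] [DecidableEq ι] (F : ι → ℤ) (μ : ι → ℤ)
    (hμ : Function.Injective μ) (c₀ : ι) (hF : F c₀ ≠ 0) :
    ∃ (Q : Polynomial ℤ) (c : ℤ), 0 < c ∧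
      ∀ s : ℤ, ∑ i, F i * Q.eval (s + μ i) = c := by
  -- step 1: some polynomial has nonzero correlation at s = 0
  have hex : ∃ r : ℕ, ∃ Q : Polynomial ℤ, Q.natDegree = r ∧
      (∑ i, F i * Q.eval (μ i)) ≠ 0 := by
    refine ⟨_, ∏ j ∈ Finset.univ.erase c₀, (X - C (μ j)), rfl, ?_⟩
    have hsum : ∑ i, F i * (∏ j ∈ Finset.univ.erase c₀, (X - C (μ j))).eval (μ i)
        = F c₀ * (∏ j ∈ Finset.univ.erase c₀, (X - C (μ j))).eval (μ c₀) := by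
      refine Finset.sum_eq_single c₀ (fun i _ hi => ?_) (by simp)
      have : (∏ j ∈ Finset.univ.erase c₀, (X - C (μ j))).eval (μ i) = 0 := by
        rw [eval_prod]
        exact Finset.prod_eq_zero (Finset.mem_erase.mpr ⟨hi, Finset.mem_univ i⟩) (by simp)
      rw [this, mul_zero]
    rw [hsum]
    refine mul_ne_zero hF ?_
    rw [eval_prod]
    refine Finset.prod_ne_zero_iff.mpr (fun j hj => ?_)
    have hj' : j ≠ c₀ := (Finset.mem_erase.mp hj).1
    simp only [eval_sub, eval_X, eval_C, sub_ne_zero]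
    exact fun h => hj' (hμ h.symm)
  classical
  obtain ⟨Q₁, hQdeg, hQne⟩ := Nat.find_spec hex
  set r₀ := Nat.find hex with hr₀
  -- minimality
  have hmin : ∀ Q : Polynomial ℤ, Q.natDegree < r₀ → (∑ i, F i * Q.eval (μ i)) = 0 := by
    intro Q hQ
    by_contra h
    exact Nat.find_min hex hQ ⟨Q, rfl, h⟩
  -- constancy of correlation
  have hconst : ∀ s : ℤ, ∑ i, F i * Q₁.eval (s + μ i) = ∑ i, F i * Q₁.eval (μ i) := by
    intro s
    rcases Nat.eq_zero_or_pos r₀ with h0 | hpos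
    · obtain ⟨a, ha⟩ := Polynomial.natDegree_eq_zero.mp (hQdeg.trans h0)
      simp [← ha]
    · have hQ₁0 : Q₁ ≠ 0 := by
        rintro rfl; simp at hQne
      set Qc : Polynomial ℤ := Q₁.comp (X + C s) with hQc
      have hdc : Qc.natDegree = Q₁.natDegree := by
        rw [hQc, natDegree_comp, natDegree_X_add_C, mul_one]
      have hlc : Qc.leadingCoeff = Q₁.leadingCoeff := by
        rw [hQc, leadingCoeff_comp (by rw [natDegree_X_add_C]; exact one_ne_zero),
          leadingCoeff_X_add_C, one_pow, mul_one]
      have hQc0 : Qc ≠ 0 := by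
        intro h
        apply hQ₁0
        rwa [h, leadingCoeff_zero, eq_comm, leadingCoeff_eq_zero] at hlc
      have hdeg : Qc.degree = Q₁.degree := by
        rw [degree_eq_natDegree hQc0, degree_eq_natDegree hQ₁0, hdc]
      have hsub : (Qc - Q₁).natDegree < r₀ := by
        rcases eq_or_ne (Qc - Q₁) 0 with h | h
        · rw [h, natDegree_zero]; exact hpos
        · have := degree_sub_lt hdeg hQc0 hlc
          rw [← hQdeg]
          exact natDegree_lt_natDegree h (by rwa [hdeg] at this)
      have h0 := hmin _ hsub
      have : ∀ i, Q₁.eval (s + μ i) = (Qc - Q₁).eval (μ i) + Q₁.eval (μ i) := by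
        intro i
        simp [hQc, eval_comp, add_comm]
      simp only [this, mul_add]
      rw [Finset.sum_add_distrib]
      rw [h0, zero_add]
  set c₁ : ℤ := ∑ i, F i * Q₁.eval (μ i) with hc₁
  refine ⟨C c₁ * Q₁, c₁ * c₁, mul_self_pos.mpr hQne, fun s => ?_⟩
  have : ∀ i, F i * (C c₁ * Q₁).eval (s + μ i) = c₁ * (F i * Q₁.eval (s + μ i)) := by
    intro i; simp [eval_mul]; ring
  simp only [this, ← Finset.mul_sum]
  rw [hconst s]

/-- embed `Fin d → Fin n` as integer points of the cube -/
def embC {d n : ℕ} (c : Fin d → Fin n) : Fin d → ℤ := fun i => (c i : ℤ)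

lemma inCube_embC {d n : ℕ} (c : Fin d → Fin n) : inCube d n (embC c) := by
  intro i
  refine ⟨Int.ofNat_nonneg _, ?_⟩
  show ((c i : ℤ)) < (n : ℤ)
  exact_mod_cast (c i).2

lemma exists_embC {d n : ℕ} {p : Fin d → ℤ} (hp : inCube d n p) :
    ∃ c : Fin d → Fin n, embC c = p := by
  refine ⟨fun i => ⟨(p i).toNat, ?_⟩, ?_⟩
  · have h := hp i; omega
  · funext i
    have h := hp i
    simp only [embC]
    omega

lemma embC_inj {d n : ℕ} : Function.Injective (embC (d := d) (n := n)) := by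
  intro c c' h
  funext i
  have := congrFun h i
  simp only [embC, Int.natCast_inj] at this
  exact Fin.ext (by exact_mod_cast this)

/-- the base-`n` linear functional on `ℤ^d` -/
def lam (d n : ℕ) (t : Fin d → ℤ) : ℤ := ∑ i, t i * (n : ℤ) ^ (i : ℕ)

lemma lam_add {d n : ℕ} (t s : Fin d → ℤ) : lam d n (t + s) = lam d n t + lam d n s := by
  simp [lam, add_mul, Finset.sum_add_distrib]

lemma lam_embC_inj {d n : ℕ} :
    Function.Injective (fun c : Fin d → Fin n => lam d n (embC c)) := by
  intro c c' h
  apply finFunctionFinEquiv.injective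
  apply Fin.val_injective
  have h1 : ∀ c : Fin d → Fin n, lam d n (embC c)
      = ((finFunctionFinEquiv c : ℕ) : ℤ) := by
    intro c
    rw [finFunctionFinEquiv_apply]
    push_cast [lam, embC]
    rfl
  simp only [h1] at h
  exact_mod_cast h

/-- `u` occurs in `x` at position `t`. -/
def occAt {A : Type*} {d : ℕ} (n : ℕ) (u x : (Fin d → ℤ) → A) (t : Fin d → ℤ) : Prop :=
  ∀ p, inCube d n p → x (t + p) = u p

lemma isClosed_not_occAt {A : Type*} [TopologicalSpace A] [DiscreteTopology A] {d : ℕ}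
    (n : ℕ) (u : (Fin d → ℤ) → A) (t : Fin d → ℤ) :
    IsClosed {x : (Fin d → ℤ) → A | ¬ occAt n u x t} := by
  have hset : {x : (Fin d → ℤ) → A | occAt n u x t}
      = ⋂ c : Fin d → Fin n, {x | x (t + embC c) = u (embC c)} := by
    ext x
    simp only [Set.mem_iInter, Set.mem_setOf_eq]
    constructor
    · intro hx c; exact hx _ (inCube_embC c)
    · intro hx p hp
      obtain ⟨c, rfl⟩ := exists_embC hp
      exact hx c
  have : {x : (Fin d → ℤ) → A | ¬ occAt n u x t} = {x | occAt n u x t}ᶜ := rfl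
  rw [this, isClosed_compl_iff, hset]
  refine isOpen_iInter_of_finite (fun c => ?_)
  have : {x : (Fin d → ℤ) → A | x (t + embC c) = u (embC c)}
      = (fun x : (Fin d → ℤ) → A => x (t + embC c)) ⁻¹' {u (embC c)} := by
    ext x; simp [Set.mem_preimage]
  rw [this]
  exact (isOpen_discrete _).preimage (continuous_apply (t + embC c))

/-- In a minimal `ℤ^d` subshift, for patterns `u, v` of support `[0,n-1]^d`
in the language, `E_X(u) ⊆ E_X(v)` iff `u = v` (on the support). -/
theorem minimal_extender_incomparable {A : Type*} [Fintype A]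
    [TopologicalSpace A] [DiscreteTopology A] {d : ℕ}
    (X : Set ((Fin d → ℤ) → A)) (hmin : IsMinimalSubshift X) :
    ∀ n : ℕ, 0 < n → ∀ u v : (Fin d → ℤ) → A,
      inLangCube X n u → inLangCube X n v →
      (extSetCube X n u ⊆ extSetCube X n v ↔ ∀ p, inCube d n p → u p = v p) := by
  intro n hn u v hu hv
  constructor
  · -- hard direction
    intro hsub
    by_contra hne
    push_neg at hne
    obtain ⟨p₀, hp₀cube, hp₀⟩ := hne
    classical
    obtain ⟨⟨hXclosed, hXinv⟩, hXmin⟩ := hmin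
    -- the rewriting lemma: occurrences of u may be replaced by v
    have hrw : ∀ x ∈ X, ∀ t : Fin d → ℤ, occAt n u x t →
        (fun q => if inCube d n (q - t) then v (q - t) else x q) ∈ X := by
      intro x hx t ht
      have hy : (fun p => x (p + t)) ∈ X := hXinv x hx t
      have hglue : glueCube n u (fun p => x (p + t)) = (fun p => x (p + t)) := by
        funext p
        unfold glueCube
        split_ifs with h
        · rw [add_comm p t]; exact (ht p h).symm
        · rfl
      have hyext : (fun p => x (p + t)) ∈ extSetCube X n u := by
        show glueCube n u _ ∈ X
        rw [hglue]; exact hy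
      have hvX : glueCube n v (fun p => x (p + t)) ∈ X := hsub hyext
      have hmem := hXinv _ hvX (-t)
      convert hmem using 1
      funext q
      have hq : q + -t = q - t := (sub_eq_add_neg q t).symm
      show (if inCube d n (q - t) then v (q - t) else x q) = glueCube n v _ (q + -t)
      rw [hq]
      unfold glueCube
      split_ifs with h
      · rfl
      · show x q = x (q - t + t)
        rw [sub_add_cancel]
    -- the weight function and the correlation polynomial
    obtain ⟨c₀, hc₀⟩ := exists_embC hp₀cube
    set h : A → ℤ := fun a => if a = u p₀ then 1 else 0 with hhdef
    set F : (Fin d → Fin n) → ℤ := fun c => h (v (embC c)) - h (u (embC c)) with hFdef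
    have hF : F c₀ ≠ 0 := by
      have : ¬ (v p₀ = u p₀) := fun hvu => hp₀ hvu.symm
      simp only [hFdef, hhdef, hc₀, if_neg this, if_pos rfl]
      norm_num
    obtain ⟨Q, cst, hcst, hQ⟩ :=
      key_poly F (fun c => lam d n (embC c)) lam_embC_inj c₀ hF
    set G : (Fin d → ℤ) → ℤ := fun q => Q.eval (lam d n q) with hGdef
    -- Step 1: for every k there is a point of X with no occurrence of u in the k-box
    have hKne : ∀ k : ℕ, ∃ x ∈ X, ∀ t : Fin d → ℤ,
        (∀ i, |t i| ≤ (k : ℤ)) → ¬ occAt n u x t := by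
      intro k
      set B : Finset (Fin d → ℤ) :=
        Fintype.piFinset (fun _ => Finset.Icc (-(k : ℤ)) ((k : ℤ) + n)) with hBdef
      set H : ((Fin d → ℤ) → A) → ℤ := fun x => ∑ q ∈ B, h (x q) * G q with hHdef
      have hbdd : ∀ x, H x ≤ ∑ q ∈ B, |G q| := by
        intro x
        refine Finset.sum_le_sum (fun q _ => ?_)
        by_cases hq : x q = u p₀
        · simp only [hhdef, if_pos hq, one_mul]; exact le_abs_self _
        · simp only [hhdef, if_neg hq, zero_mul]; exact abs_nonneg _
      obtain ⟨x₀, hx₀X, -⟩ := hu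
      obtain ⟨z, ⟨xm, hxmX, hxmH⟩, hmax⟩ :=
        Int.exists_greatest_of_bdd (P := fun z => ∃ x ∈ X, H x = z)
          ⟨∑ q ∈ B, |G q|, fun z hz => by obtain ⟨x, -, rfl⟩ := hz; exact hbdd x⟩
          ⟨H x₀, x₀, hx₀X, rfl⟩
      refine ⟨xm, hxmX, fun t ht hocc => ?_⟩
      set x' : (Fin d → ℤ) → A :=
        fun q => if inCube d n (q - t) then v (q - t) else xm q with hx'def
      have hx'X : x' ∈ X := hrw xm hxmX t hocc
      -- the image of the cube at t
      set I : Finset (Fin d → ℤ) :=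
        Finset.image (fun c : Fin d → Fin n => t + embC c) Finset.univ with hIdef
      have hIB : I ⊆ B := by
        intro q hq
        obtain ⟨c, -, rfl⟩ := Finset.mem_image.mp hq
        rw [hBdef, Fintype.mem_piFinset]
        intro i
        rw [Finset.mem_Icc]
        obtain ⟨h1, h2⟩ := inCube_embC c i
        have h3 := ht i
        rw [abs_le] at h3
        show -(k : ℤ) ≤ t i + embC c i ∧ t i + embC c i ≤ (k : ℤ) + n
        omega
      have hdiff : H x' - H xm = cst := by
        have e1 : H x' - H xm = ∑ q ∈ B, (h (x' q) * G q - h (xm q) * G q) := by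
          rw [hHdef, Finset.sum_sub_distrib]
        rw [e1]
        have e2 : ∑ q ∈ B, (h (x' q) * G q - h (xm q) * G q)
            = ∑ q ∈ I, (h (x' q) * G q - h (xm q) * G q) := by
          refine (Finset.sum_subset hIB (fun q hqB hqI => ?_)).symm
          have hnc : ¬ inCube d n (q - t) := by
            intro hc
            obtain ⟨c, hc'⟩ := exists_embC hc
            refine hqI (Finset.mem_image.mpr ⟨c, Finset.mem_univ c, ?_⟩)
            rw [hc']
            abel
          simp only [hx'def, if_neg hnc, sub_self]
        rw [e2, hIdef, Finset.sum_image
          (fun c _ c' _ hcc => embC_inj (by exact add_left_cancel hcc))]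
        have e3 : ∀ c : Fin d → Fin n,
            h (x' (t + embC c)) * G (t + embC c) - h (xm (t + embC c)) * G (t + embC c)
            = F c * Q.eval (lam d n t + lam d n (embC c)) := by
          intro c
          have h1 : x' (t + embC c) = v (embC c) := by
            simp only [hx'def, add_sub_cancel_left, if_pos (inCube_embC c)]
          have h2 : xm (t + embC c) = u (embC c) := hocc _ (inCube_embC c)
          rw [h1, h2, ← sub_mul, hFdef]
          congr 1
          rw [hGdef]
          simp only
          rw [lam_add]
        rw [Finset.sum_congr rfl (fun c _ => e3 c)]
        exact hQ (lam d n t)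
      have hle : H x' ≤ z := hmax _ ⟨x', hx'X, rfl⟩
      omega
    -- Step 2: compactness gives a point of X with no occurrence of u at all
    set K : ℕ → Set ((Fin d → ℤ) → A) := fun k =>
      X ∩ {x | ∀ t : Fin d → ℤ, (∀ i, |t i| ≤ (k : ℤ)) → ¬ occAt n u x t} with hKdef
    have hKcl : ∀ k, IsClosed (K k) := by
      intro k
      refine hXclosed.inter ?_
      have : {x : (Fin d → ℤ) → A | ∀ t : Fin d → ℤ, (∀ i, |t i| ≤ (k : ℤ)) → ¬ occAt n u x t}
          = ⋂ t ∈ {t : Fin d → ℤ | ∀ i, |t i| ≤ (k : ℤ)}, {x | ¬ occAt n u x t} := by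
        ext x
        simp only [Set.mem_iInter, Set.mem_setOf_eq]
      rw [this]
      exact isClosed_biInter (fun t _ => isClosed_not_occAt n u t)
    have hKnonempty : ∀ k, (K k).Nonempty := by
      intro k
      obtain ⟨x, hx1, hx2⟩ := hKne k
      exact ⟨x, hx1, hx2⟩
    have hKdec : ∀ k, K (k + 1) ⊆ K k := by
      intro k x hx
      refine ⟨hx.1, fun t ht => hx.2 t (fun i => ?_)⟩
      have := ht i
      push_cast
      push_cast at this
      omega
    have hcomp : IsCompact (K 0) := (hKcl 0).isCompact
    obtain ⟨y, hy⟩ := IsCompact.nonempty_iInter_of_sequence_nonempty_isCompact_isClosed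
      K hKdec hKnonempty hcomp hKcl
    have hyX : y ∈ X := (Set.mem_iInter.mp hy 0).1
    have hyno : ∀ t, ¬ occAt n u y t := by
      intro t
      set k : ℕ := Finset.univ.sup (fun i => (t i).natAbs) with hkdef
      refine (Set.mem_iInter.mp hy k).2 t (fun i => ?_)
      have h1 : (t i).natAbs ≤ k := Finset.le_sup (f := fun i => (t i).natAbs) (Finset.mem_univ i)
      rw [Int.abs_eq_natAbs]
      exact_mod_cast h1
    -- Step 3: the subshift avoiding u contradicts minimality
    set Y : Set ((Fin d → ℤ) → A) := {x | x ∈ X ∧ ∀ t, ¬ occAt n u x t} with hYdef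
    have hYsub : Y ⊆ X := fun x hx => hx.1
    have hYshift : IsSubshiftCube Y := by
      constructor
      · have : Y = X ∩ ⋂ t, {x | ¬ occAt n u x t} := by
          ext x
          simp only [hYdef, Set.mem_inter_iff, Set.mem_iInter, Set.mem_setOf_eq]
        rw [this]
        exact hXclosed.inter (isClosed_iInter (fun t => isClosed_not_occAt n u t))
      · intro x hx t
        refine ⟨hXinv x hx.1 t, fun s hs => ?_⟩
        apply hx.2 (s + t)
        intro p hp
        have := hs p hp
        simp only at this
        rw [← this, add_right_comm]
    have hYeq := hXmin Y hYsub hYshift ⟨y, hyX, hyno⟩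
    obtain ⟨x₀, hx₀, t₀, ht₀⟩ := hu
    rw [← hYeq] at hx₀
    exact hx₀.2 t₀ ht₀
  · -- easy direction
    intro heq x hx
    have hgl : glueCube n u x = glueCube n v x := by
      funext p
      unfold glueCube
      split_ifs with hp
      · exact heq p hp
      · rfl
    show glueCube n v x ∈ X
    rw [← hgl]
    exact hx
end

section
/- For a minimal Z^d subshift X, the extender entropy equals the topological entropy: h_E(X) = h(X) = lim_n (log |L_n(X)|)/n^d, where L_n(X) is the set of patterns of support [0,n-1]^d in the language of X. -/
open Filter Topology

/-- The set of patterns of support `[0,n-1]^d` appearing in `X`, as functions on the cube. -/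
def langSetCube {A : Type*} {d : ℕ} (X : Set ((Fin d → ℤ) → A)) (n : ℕ) :
    Set ({p : Fin d → ℤ // inCube d n p} → A) :=
  {w | ∃ x ∈ X, ∃ t : Fin d → ℤ, ∀ p : {p : Fin d → ℤ // inCube d n p}, x (t + p.val) = w p}

/-!
If two distinct patterns `u`, `v` of the language of a minimal subshift `X` had the same extender
set, any occurrence of `u` in a point of `X` could be replaced by `v` without leaving `X`. Let `j₀`
be the lexicographically first position where `u` and `v` differ, and order the alphabet so that
`u j₀ < v j₀`. By minimality and compactness, `u` occurs in every point of `X` at one of finitely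
many positions `t ∈ T`, hence inside the finite window `T + S`. Replacing such an occurrence in a
point `x ∈ X` whose restriction to the window is lexicographically maximal changes `x` first at
`t + j₀`, where it increases the letter: a contradiction. So the extender set map is injective on
`L_n(X)`.
-/

namespace Pattern

variable {A : Type*} {d : ℕ} {S : Set (Fin d → ℤ)}

def OccursAt (x : (Fin d → ℤ) → A) (u : S → A) (t : Fin d → ℤ) : Prop :=
  ∀ p : S, x (t + p) = u p

def language (X : Set ((Fin d → ℤ) → A)) (S : Set (Fin d → ℤ)) : Set (S → A) :=
  {u | ∃ x ∈ X, ∃ t, OccursAt x u t}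

open scoped Classical in
noncomputable def glue (u : S → A) (x : (Fin d → ℤ) → A) : (Fin d → ℤ) → A :=
  fun p => if h : p ∈ S then u ⟨p, h⟩ else x p

def extenderSet (X : Set ((Fin d → ℤ) → A)) (u : S → A) : Set ((Fin d → ℤ) → A) :=
  {x | glue u x ∈ X}

open scoped Classical in
noncomputable def pasteAt (x : (Fin d → ℤ) → A) (v : S → A) (t : Fin d → ℤ) :
    (Fin d → ℤ) → A :=
  fun p => if h : p - t ∈ S then v ⟨p - t, h⟩ else x p

lemma pasteAt_add (x : (Fin d → ℤ) → A) (v : S → A) (t : Fin d → ℤ) (j : S) :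
    pasteAt x v t (t + j) = v j := by
  simp [pasteAt]

lemma pasteAt_apply_eq_self {x : (Fin d → ℤ) → A} {u v : S → A} {t q : Fin d → ℤ}
    (hocc : OccursAt x u t) (huv : ∀ hq : q - t ∈ S, u ⟨q - t, hq⟩ = v ⟨q - t, hq⟩) :
    pasteAt x v t q = x q := by
  by_cases hq : q - t ∈ S
  · rw [pasteAt, dif_pos hq, ← huv hq, ← hocc, add_sub_cancel]
  · rw [pasteAt, dif_neg hq]

lemma isOpen_setOf_occursAt [Finite S] [TopologicalSpace A] [DiscreteTopology A] (u : S → A)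
    (t : Fin d → ℤ) : IsOpen {x : (Fin d → ℤ) → A | OccursAt x u t} := by
  simp only [OccursAt, Set.ofPred_forall]
  exact isOpen_iInter_of_finite fun p =>
    (isOpen_discrete {u p}).preimage (continuous_apply (A := fun _ => A) (t + p))

variable [TopologicalSpace A] {X : Set ((Fin d → ℤ) → A)}

lemma pasteAt_mem_of_extenderSet_eq (hX : IsSubshiftCube X) {u v : S → A}
    (hE : extenderSet X u = extenderSet X v) {x : (Fin d → ℤ) → A} (hx : x ∈ X)
    {t : Fin d → ℤ} (hocc : OccursAt x u t) : pasteAt x v t ∈ X := by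
  have hglue : glue u (fun q => x (q + t)) = fun q => x (q + t) := by
    funext q
    by_cases hq : q ∈ S
    · rw [glue, dif_pos hq, ← hocc ⟨q, hq⟩, add_comm]
    · rw [glue, dif_neg hq]
  have hshift : (fun q => x (q + t)) ∈ extenderSet X v := by
    rw [← hE, extenderSet, Set.mem_ofPred_eq, hglue]
    exact hX.2 x hx t
  convert hX.2 _ hshift (-t) using 1
  funext p
  by_cases hp : p - t ∈ S <;> simp [pasteAt, glue, ← sub_eq_add_neg, hp]

variable [DiscreteTopology A] [Finite S]

lemma occursAt_of_isMinimalSubshift (hX : IsMinimalSubshift X) {u : S → A}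
    (hu : u ∈ language X S) {x : (Fin d → ℤ) → A} (hx : x ∈ X) : ∃ t, OccursAt x u t := by
  set Y := X \ ⋃ t, {y | OccursAt y u t}
  have hY : IsSubshiftCube Y := by
    refine ⟨hX.1.1.sdiff (isOpen_iUnion fun t => isOpen_setOf_occursAt u t), ?_⟩
    rintro y ⟨hyX, hy⟩ s
    refine ⟨hX.1.2 y hyX s, fun hocc => hy ?_⟩
    obtain ⟨t, ht⟩ := Set.mem_iUnion.1 hocc
    exact Set.mem_iUnion.2 ⟨t + s, fun p => by rw [add_right_comm]; exact ht p⟩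
  by_contra! hnot
  have hYX : Y = X := hX.2 Y Set.sdiff_subset hY ⟨x, hx, by simpa using hnot⟩
  obtain ⟨y, hy, t, ht⟩ := hu
  rw [← hYX] at hy
  exact hy.2 (Set.mem_iUnion.2 ⟨t, ht⟩)

lemma exists_finset_occursAt [Finite A] (hX : IsMinimalSubshift X) {u : S → A}
    (hu : u ∈ language X S) : ∃ T : Finset (Fin d → ℤ), ∀ x ∈ X, ∃ t ∈ T, OccursAt x u t := by
  obtain ⟨T, hT⟩ := hX.1.1.isCompact.elim_finite_subcover (fun t => {x | OccursAt x u t})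
    (isOpen_setOf_occursAt u) fun x hx => Set.mem_iUnion.2 (occursAt_of_isMinimalSubshift hX hu hx)
  exact ⟨T, fun x hx => by simpa using hT hx⟩

lemma lt_at_first_diff_of_extenderSet_eq [Finite A] [LinearOrder A] (hX : IsMinimalSubshift X)
    {u v : S → A} (hu : u ∈ language X S) (hE : extenderSet X u = extenderSet X v) {j₀ : S}
    (hne : u j₀ ≠ v j₀)
    (hfirst : ∀ j : S, u j ≠ v j → toLex (j₀ : Fin d → ℤ) ≤ toLex (j : Fin d → ℤ)) :
    v j₀ < u j₀ := by
  obtain ⟨T, hT⟩ := exists_finset_occursAt hX hu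
  let W : Set (Lex (Fin d → ℤ)) := (fun q => toLex (q.1 + q.2)) '' ((T : Set _) ×ˢ S)
  have : Finite W := ((T.finite_toSet.prod (Set.toFinite S)).image _).to_subtype
  have : Finite (Lex (W → A)) := Finite.of_equiv _ toLex
  let ρ : ((Fin d → ℤ) → A) → Lex (W → A) := fun x => toLex fun p => x (ofLex p.1)
  obtain ⟨x₁, hx₁, -⟩ := hu
  obtain ⟨_, ⟨x, hx, rfl⟩, hmax⟩ :=
    Set.exists_max_image (ρ '' X) id (Set.toFinite _) ⟨ρ x₁, x₁, hx₁, rfl⟩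
  obtain ⟨t, htT, hocc⟩ := hT x hx
  have hpaste : ρ (pasteAt x v t) ≤ ρ x :=
    hmax _ ⟨_, pasteAt_mem_of_extenderSet_eq hX.1 hE hx hocc, rfl⟩
  refine hne.lt_or_gt.resolve_left fun hlt => hpaste.not_gt ?_
  -- `x` and `pasteAt x v t` first differ at `t + j₀`, by translation invariance of `toLex`
  refine ⟨⟨toLex (t + j₀), (t, j₀), ⟨htT, j₀.2⟩, rfl⟩, fun k hk => ?_, ?_⟩
  · refine (pasteAt_apply_eq_self hocc fun hq => ?_).symm
    by_contra huv
    have h := add_le_add_right (hfirst _ huv) (toLex t)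
    rw [← toLex_add, ← toLex_add, add_sub_cancel, toLex_ofLex] at h
    exact h.not_gt hk
  · change x (t + j₀) < pasteAt x v t (t + j₀)
    rw [pasteAt_add, hocc j₀]
    exact hlt

lemma injOn_extenderSet_language [Finite A] (hX : IsMinimalSubshift X) :
    Set.InjOn (extenderSet X) (language X S) := by
  intro u hu v hv hE
  by_contra hne
  let : LinearOrder A := LinearOrder.lift' _ (Finite.equivFin A).injective
  obtain ⟨j₀, hj₀, hfirst⟩ := Set.exists_min_image {j : S | u j ≠ v j}
    (fun j => toLex (j : Fin d → ℤ)) (Set.toFinite _) (Function.ne_iff.1 hne)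
  exact (lt_at_first_diff_of_extenderSet_eq hX hu hE hj₀ hfirst).asymm <|
    lt_at_first_diff_of_extenderSet_eq hX hv hE.symm hj₀.symm fun j hj => hfirst j hj.symm

end Pattern

open Pattern

instance finite_setOf_inCube (d n : ℕ) : Finite {p : Fin d → ℤ | inCube d n p} :=
  Set.Finite.to_subtype <| (Set.Finite.pi fun _ : Fin d => Set.finite_Ico (0 : ℤ) n).subset
    fun _ (hp : inCube d n _) i _ => hp i

lemma langSetCube_eq_language {A : Type*} {d : ℕ} (X : Set ((Fin d → ℤ) → A)) (n : ℕ) :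
    langSetCube X n = language X {p | inCube d n p} :=
  rfl

lemma glueCube_eq_glue {A : Type*} {d : ℕ} (n : ℕ) (w x : (Fin d → ℤ) → A) :
    glueCube n w x = glue (fun p : {p | inCube d n p} => w p) x := by
  funext p
  by_cases hp : inCube d n p <;> simp [glueCube, glue, hp]

lemma extSetCube_eq_extenderSet {A : Type*} {d : ℕ} (X : Set ((Fin d → ℤ) → A)) (n : ℕ)
    (w : (Fin d → ℤ) → A) :
    extSetCube X n w = extenderSet X (fun p : {p | inCube d n p} => w p) := by
  ext x
  rw [extenderSet, extSetCube, Set.mem_ofPred_eq, Set.mem_ofPred_eq, glueCube_eq_glue]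

lemma extSetsCube_eq_image {A : Type*} {d : ℕ} (X : Set ((Fin d → ℤ) → A)) (n : ℕ) :
    extSetsCube X n = extenderSet X '' language X {p | inCube d n p} := by
  ext E
  constructor
  · rintro ⟨w, ⟨x, hx, t, hw⟩, rfl⟩
    exact ⟨_, ⟨x, hx, t, fun p => hw p p.2⟩, (extSetCube_eq_extenderSet X n w).symm⟩
  · rintro ⟨u, ⟨x, hx, t, hu⟩, rfl⟩
    refine ⟨fun p => x (t + p), ⟨x, hx, t, fun p _ => rfl⟩, ?_⟩
    rw [extSetCube_eq_extenderSet]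
    congr
    exact (funext hu).symm

/-- For a minimal `ℤ^d` subshift, `|E_X(n)| = |L_n(X)|` for all `n`, hence the
extender entropy equals the topological entropy. -/
theorem minimal_extender_entropy_eq_topological {A : Type*} [Fintype A]
    [TopologicalSpace A] [DiscreteTopology A] {d : ℕ}
    (X : Set ((Fin d → ℤ) → A)) (hmin : IsMinimalSubshift X) :
    (∀ n : ℕ, (extSetsCube X n).ncard = (langSetCube X n).ncard) ∧
    (∀ α : ℝ, Tendsto (extEntCube X) atTop (nhds α) ↔
      Tendsto (fun n => Real.log ((langSetCube X n).ncard) / (n : ℝ) ^ d) atTop (nhds α)) := by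
  have hcard (n : ℕ) : (extSetsCube X n).ncard = (langSetCube X n).ncard := by
    rw [extSetsCube_eq_image, (injOn_extenderSet_language hmin).ncard_image,
      langSetCube_eq_language]
  refine ⟨hcard, fun α => tendsto_congr fun n => ?_⟩
  rw [extEntCube, hcard]
end

section
/- Given an effective Z^d subshift X and two patterns u, v of the same support in its language, the predicate E_X(u) ⊆ E_X(v) is expressible by a Π⁰₂ formula: E_X(u) ⊆ E_X(v) holds if and only if for every finite pattern B containing u (at a fixed position), either B is not in the language of X, or the pattern obtained by replacing u by v in B is in the language of X. -/
open Filter Topology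

/-- Glue a pattern `w` of finite support `P` onto the completion `x` outside `P`. -/
def glueP {A : Type*} {d : ℕ} (P : Finset (Fin d → ℤ)) (w x : (Fin d → ℤ) → A) :
    (Fin d → ℤ) → A :=
  fun p => if p ∈ P then w p else x p

/-- The extender set of a pattern of finite support `P`. -/
def extSetP {A : Type*} {d : ℕ} (X : Set ((Fin d → ℤ) → A)) (P : Finset (Fin d → ℤ))
    (w : (Fin d → ℤ) → A) : Set ((Fin d → ℤ) → A) :=
  {x | glueP P w x ∈ X}

/-- The pattern `w` of support `P` appears in some configuration of `X`. -/
def inLangP {A : Type*} {d : ℕ} (X : Set ((Fin d → ℤ) → A)) (P : Finset (Fin d → ℤ))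
    (w : (Fin d → ℤ) → A) : Prop :=
  ∃ x ∈ X, ∃ t : Fin d → ℤ, ∀ p ∈ P, x (t + p) = w p

/-- For a subshift `X` and patterns `u, v` of the same finite support `P`
in its language, `E_X(u) ⊆ E_X(v)` holds iff for every finite pattern `B` containing `u`
(at the fixed position `P`), if `B` is in the language of `X` then the pattern obtained
from `B` by replacing `u` with `v` is in the language of `X`.  (This is the combinatorial
content of the `Π⁰₂`-expressibility of extender-set inclusion for effective subshifts.) -/
theorem extender_inclusion_iff_finite_patterns {A : Type*} [Fintype A]
    [TopologicalSpace A] [DiscreteTopology A] {d : ℕ}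
    (X : Set ((Fin d → ℤ) → A)) (hX : IsSubshiftCube X)
    (P : Finset (Fin d → ℤ)) (u v : (Fin d → ℤ) → A)
    (hu : inLangP X P u) (hv : inLangP X P v) :
    extSetP X P u ⊆ extSetP X P v ↔
      ∀ (Q : Finset (Fin d → ℤ)) (B : (Fin d → ℤ) → A), P ⊆ Q →
        (∀ p ∈ P, B p = u p) → inLangP X Q B →
        inLangP X Q (fun p => if p ∈ P then v p else B p) := by
  constructor
  · rintro h Q B hPQ hBu ⟨x, hx, t, ht⟩
    set y : (Fin d → ℤ) → A := fun p => x (p + t) with hy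
    have hyX : y ∈ X := hX.2 x hx t
    have hyQ : ∀ p ∈ Q, y p = B p := by
      intro p hp
      show x (p + t) = B p
      rw [add_comm]; exact ht p hp
    have hglue : glueP P u y = y := by
      funext p
      by_cases hp : p ∈ P
      · simp [glueP, hp, hyQ p (hPQ hp), hBu p hp]
      · simp [glueP, hp]
    have hyu : y ∈ extSetP X P u := by
      show glueP P u y ∈ X
      rw [hglue]; exact hyX
    have hyv : glueP P v y ∈ X := h hyu
    refine ⟨glueP P v y, hyv, 0, fun p hp => ?_⟩
    simp only [zero_add, glueP]
    by_cases hpP : p ∈ P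
    · simp [hpP]
    · simp [hpP, hyQ p hp]
  · intro h x hx
    have key : ∀ Q : Finset (Fin d → ℤ), ∃ y ∈ X, ∀ p ∈ Q, y p = glueP P v x p := by
      intro Q
      have hB : inLangP X (P ∪ Q) (glueP P u x) :=
        ⟨glueP P u x, hx, 0, fun p _ => by rw [zero_add]⟩
      have hBu : ∀ p ∈ P, glueP P u x p = u p := fun p hp => by simp [glueP, hp]
      obtain ⟨y, hyX, t, ht⟩ := h (P ∪ Q) (glueP P u x) Finset.subset_union_left hBu hB
      refine ⟨fun p => y (p + t), hX.2 y hyX t, fun p hp => ?_⟩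
      have h1 := ht p (Finset.mem_union_right _ hp)
      show y (p + t) = glueP P v x p
      rw [add_comm, h1]
      by_cases hpP : p ∈ P
      · simp [glueP, hpP]
      · simp [glueP, hpP]
    have hcl : glueP P v x ∈ closure X := by
      rw [mem_closure_iff_nhds]
      intro U hU
      rw [nhds_pi, Filter.mem_pi] at hU
      obtain ⟨I, hI, t, ht, hsub⟩ := hU
      obtain ⟨y, hyX, hy⟩ := key hI.toFinset
      refine ⟨y, hsub fun i hi => ?_, hyX⟩
      rw [hy i (hI.mem_toFinset.mpr hi)]
      exact mem_of_mem_nhds (ht i)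
    exact hX.1.closure_subset hcl
end

section
/- The class of Π₂ real numbers is closed under the following normal form: every α ∈ Π₂ ∩ [0,1] can be written as α = inf_i sup_j β_{i,j} for a computable double sequence of rationals (β_{i,j}) such that for each i the sequence j ↦ β_{i,j} is nondecreasing with limit α_i, and the sequence i ↦ α_i is nonincreasing with limit α. -/
/-!
Replacing `β i j` by `max_{l ≤ j} β i l` makes every row nondecreasing without changing its
supremum `A i`. Taking then the running minimum `min_{k ≤ i}` over the rows makes the row
limits `min_{k ≤ i} A k` nonincreasing with the same infimum `α`, and truncating everything at
`0 ≤ α` does not change that infimum. All three operations are computable once `≤` on `ℚ` is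
primitive recursive; for the `Denumerable ℚ` coding this reduces to enumerating the primitive
recursive set of codes of rationals in increasing order.
-/

open Filter Topology

/-- A `Π₂` real number: `α = inf_i sup_j β_{i,j}` for a computable double sequence of
rationals, each row having bounded range. -/
def Pi2Real (α : ℝ) : Prop :=
  ∃ β : ℕ → ℕ → ℚ, Computable₂ β ∧
    (∀ i, BddAbove (Set.range fun j => (β i j : ℝ))) ∧
    α = ⨅ i, ⨆ j, (β i j : ℝ)

open Encodable Denumerable OrderDual

/-- Searching downwards from `b x ∈ s` makes the search for the least element of `s` above `x`
primitive recursive. -/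
def Nat.leastMemGE (s : Set ℕ) [DecidablePred (· ∈ s)] (b : ℕ → ℕ) (x : ℕ) : ℕ :=
  b x - Nat.findGreatest (fun m => x ≤ b x - m ∧ b x - m ∈ s) (b x)

section LeastMemGE

variable {s : Set ℕ} [DecidablePred (· ∈ s)] {b : ℕ → ℕ}

theorem Nat.isLeast_leastMemGE {x : ℕ} (hx : x ≤ b x) (hbx : b x ∈ s) :
    IsLeast {y | y ∈ s ∧ x ≤ y} (Nat.leastMemGE s b x) := by
  have hspec := Nat.findGreatest_spec (P := fun m => x ≤ b x - m ∧ b x - m ∈ s)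
    (Nat.zero_le (b x)) ⟨hx, hbx⟩
  refine ⟨⟨hspec.2, hspec.1⟩, fun y ⟨hy, hxy⟩ => ?_⟩
  rcases le_or_gt y (b x) with hyb | hyb
  · have := Nat.le_findGreatest (P := fun m => x ≤ b x - m ∧ b x - m ∈ s) (Nat.sub_le (b x) y)
      (by simpa [Nat.sub_sub_self hyb] using ⟨hxy, hy⟩)
    simp only [Nat.leastMemGE]
    omega
  · simp only [Nat.leastMemGE]
    omega

theorem Primrec.nat_leastMemGE (hs : PrimrecPred (· ∈ s)) (hb : Primrec b) :
    Primrec (Nat.leastMemGE s b) := by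
  have hP : PrimrecRel fun x m => x ≤ b x - m ∧ b x - m ∈ s := by
    have hsub : Primrec₂ fun x m => b x - m := Primrec.nat_sub.comp (hb.comp .fst) .snd
    exact (Primrec.nat_le.comp .fst hsub).and (hs.comp hsub)
  exact Primrec.nat_sub.comp hb (Primrec.nat_findGreatest hb hP)

variable [Infinite s]

theorem Nat.Subtype.coe_ofNat_eq_rec (hb : ∀ x, x ≤ b x ∧ b x ∈ s) (n : ℕ) :
    (Nat.Subtype.ofNat s n : ℕ) =
      Nat.rec (Nat.leastMemGE s b 0) (fun _ y => Nat.leastMemGE s b (y + 1)) n := by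
  induction n with
  | zero =>
    refine ((Nat.isLeast_leastMemGE (hb 0).1 (hb 0).2).unique
      ⟨⟨(⊥ : s).2, Nat.zero_le _⟩, fun y hy => ?_⟩).symm
    exact (bot_le : (⊥ : s) ≤ ⟨y, hy.1⟩)
  | succ n ih =>
    show (Nat.Subtype.succ (Nat.Subtype.ofNat s n) : ℕ) = Nat.leastMemGE s b (Nat.rec _ _ n + 1)
    rw [← ih]
    refine ((Nat.isLeast_leastMemGE (hb _).1 (hb _).2).unique
      ⟨⟨(Nat.Subtype.succ _).2, Nat.Subtype.lt_succ_self _⟩, fun y hy => ?_⟩).symm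
    exact Nat.Subtype.succ_le_of_lt (x := ⟨y, hy.1⟩) hy.2

theorem Primrec.nat_subtype_ofNat (hs : PrimrecPred (· ∈ s)) (hb : Primrec b)
    (hbs : ∀ x, x ≤ b x ∧ b x ∈ s) : Primrec fun n => (Nat.Subtype.ofNat s n : ℕ) :=
  (Primrec.nat_rec₁ _
    ((Primrec.nat_leastMemGE hs hb).comp (Primrec.succ.comp Primrec.snd)).to₂).of_eq
    fun n => (Nat.Subtype.coe_ofNat_eq_rec hbs n).symm

end LeastMemGE

/-- `ofEncodableOfInfinite` numbers the elements of `α` by the increasing enumeration of their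
codes. -/
theorem Denumerable.primrec_encode_ofNat_ofEncodableOfInfinite (α : Type*) [Encodable α]
    [Infinite α] (hs : PrimrecPred (· ∈ Set.range (encode : α → ℕ))) {b : ℕ → ℕ}
    (hb : Primrec b) (hbs : ∀ x, x ≤ b x ∧ b x ∈ Set.range (encode : α → ℕ)) :
    Primrec fun n => encode (@ofNat α (ofEncodableOfInfinite α) n) := by
  let := decidableRangeEncode α
  have : Infinite (Set.range (encode : α → ℕ)) :=
    Infinite.of_injective _ (Equiv.ofInjective _ encode_injective).injective
  refine (Primrec.nat_subtype_ofNat hs hb hbs).of_eq fun n => ?_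
  exact congrArg Subtype.val ((equivRangeEncode α).apply_symm_apply _).symm

theorem Nat.gcd_eq_findGreatest (a b : ℕ) :
    Nat.gcd a b = Nat.findGreatest (fun d => d ∣ a ∧ d ∣ b) (a + b) := by
  refine (Nat.findGreatest_eq_iff.2 ⟨?_, fun _ => ⟨gcd_dvd_left a b, gcd_dvd_right a b⟩,
    fun d hlt _ hd => ?_⟩).symm
  · rcases Nat.eq_zero_or_pos a with rfl | ha
    · simp
    · exact (Nat.gcd_le_left b ha).trans (Nat.le_add_right a b)
  · have hpos : 0 < Nat.gcd a b := by
      refine Nat.pos_of_ne_zero fun h0 => ?_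
      rw [Nat.gcd_eq_zero_iff] at h0
      omega
    exact hlt.not_ge (Nat.le_of_dvd hpos (Nat.dvd_gcd hd.1 hd.2))

theorem Primrec.nat_dvd : PrimrecRel ((· ∣ ·) : ℕ → ℕ → Prop) :=
  (Primrec.eq.comp (Primrec.nat_mod.comp Primrec.snd Primrec.fst) (Primrec.const 0)).of_eq
    fun _ => Nat.dvd_iff_mod_eq_zero.symm

theorem Primrec.nat_gcd : Primrec₂ Nat.gcd := by
  have hP : PrimrecRel fun (p : ℕ × ℕ) d => d ∣ p.1 ∧ d ∣ p.2 :=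
    (Primrec.nat_dvd.comp Primrec.snd (Primrec.fst.comp Primrec.fst)).and
      (Primrec.nat_dvd.comp Primrec.snd (Primrec.snd.comp Primrec.fst))
  exact (Primrec.nat_findGreatest (Primrec.nat_add.comp Primrec.fst Primrec.snd) hP).of_eq
    fun p => (Nat.gcd_eq_findGreatest p.1 p.2).symm

theorem Primrec.int_equivNatSumNat : Primrec Equiv.intEquivNatSumNat :=
  Primrec.encode_iff.1 (Primrec.encode.of_eq fun z => by cases z <;> rfl)

theorem Primrec.int_toNat : Primrec Int.toNat :=
  (Primrec.sumCasesOn Primrec.int_equivNatSumNat Primrec₂.right (Primrec.const 0).to₂).of_eq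
    fun z => by cases z <;> rfl

theorem Primrec.int_toNat_neg : Primrec fun z : ℤ => (-z).toNat :=
  (Primrec.sumCasesOn Primrec.int_equivNatSumNat (Primrec.const 0).to₂
    (Primrec.succ.comp Primrec.snd).to₂).of_eq fun z => by rcases z with (_ | n) | n <;> rfl

theorem Primrec.int_natAbs : Primrec Int.natAbs :=
  (Primrec.nat_add.comp Primrec.int_toNat Primrec.int_toNat_neg).of_eq fun z => by omega

namespace Rat

theorem encode_eq (q : ℚ) : encode q = Nat.pair (encode q.num) q.den := rfl

theorem mem_range_encode_iff (k : ℕ) : k ∈ Set.range (encode : ℚ → ℕ) ↔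
    0 < k.unpair.2 ∧ (ofNat ℤ k.unpair.1).natAbs.Coprime k.unpair.2 := by
  constructor
  · rintro ⟨q, rfl⟩
    simp only [encode_eq, Nat.unpair_pair, ofNat_encode]
    exact ⟨q.pos, q.reduced⟩
  · rintro ⟨hden, hcop⟩
    refine ⟨⟨ofNat ℤ k.unpair.1, k.unpair.2, hden.ne', hcop⟩, ?_⟩
    rw [encode_eq]
    simp only [encode_ofNat, Nat.pair_unpair]

theorem primrecPred_mem_range_encode : PrimrecPred (· ∈ Set.range (encode : ℚ → ℕ)) :=
  ((Primrec.nat_lt.comp (Primrec.const 0) (Primrec.snd.comp Primrec.unpair)).and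
    (Primrec.eq.comp (Primrec.nat_gcd.comp
      (Primrec.int_natAbs.comp ((Primrec.ofNat ℤ).comp (Primrec.fst.comp Primrec.unpair)))
      (Primrec.snd.comp Primrec.unpair)) (Primrec.const 1))).of_eq
    fun k => (mem_range_encode_iff k).symm

theorem primrec_encode_ofNat : Primrec fun n => encode (ofNat ℚ n) :=
  Denumerable.primrec_encode_ofNat_ofEncodableOfInfinite ℚ primrecPred_mem_range_encode
    (b := fun x => Nat.pair x 1) (Primrec₂.natPair.comp Primrec.id (Primrec.const 1))
    fun x => ⟨Nat.left_le_pair x 1, (mem_range_encode_iff _).2 (by simp)⟩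

/-- Splitting the numerators into positive and negative parts keeps the comparison in `ℕ`. -/
theorem le_iff_toNat (x y : ℚ) : x ≤ y ↔
    x.num.toNat * y.den + (-y.num).toNat * x.den ≤
      y.num.toNat * x.den + (-x.num).toNat * y.den := by
  have key : y.num * x.den - x.num * y.den =
      ((y.num.toNat * x.den + (-x.num).toNat * y.den : ℕ) : ℤ) -
        (x.num.toNat * y.den + (-y.num).toNat * x.den : ℕ) := by
    conv_lhs => rw [← Int.toNat_sub_toNat_neg x.num, ← Int.toNat_sub_toNat_neg y.num]
    push_cast
    ring
  rw [Rat.le_iff, ← sub_nonneg, key, sub_nonneg, Nat.cast_le]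

end Rat

theorem Primrec.rat_num_den : Primrec fun q : ℚ => (q.num, q.den) :=
  Primrec.ofNat_iff.2 (Primrec.encode_iff.1 Rat.primrec_encode_ofNat)

theorem Primrec.rat_le : PrimrecRel ((· ≤ ·) : ℚ → ℚ → Prop) := by
  have num := Primrec.fst.comp Primrec.rat_num_den
  have den := Primrec.snd.comp Primrec.rat_num_den
  have pos := Primrec.int_toNat.comp num
  have neg := Primrec.int_toNat_neg.comp num
  have mul : ∀ {f g : ℚ → ℕ}, Primrec f → Primrec g → Primrec₂ fun x y : ℚ => f x * g y :=
    fun hf hg => Primrec.nat_mul.comp (hf.comp Primrec.fst) (hg.comp Primrec.snd)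
  exact (Primrec.nat_le.comp₂ (Primrec.nat_add.comp₂ (mul pos den) (mul neg den).swap)
    (Primrec.nat_add.comp₂ (mul pos den).swap (mul neg den))).of_eq
    fun x y => (Rat.le_iff_toNat x y).symm

theorem Primrec.rat_max : Primrec₂ (max : ℚ → ℚ → ℚ) :=
  (Primrec.ite Primrec.rat_le Primrec.snd Primrec.fst).of_eq fun p => (max_def p.1 p.2).symm

theorem Primrec.rat_min : Primrec₂ (min : ℚ → ℚ → ℚ) :=
  (Primrec.ite Primrec.rat_le Primrec.fst Primrec.snd).of_eq fun p => (min_def p.1 p.2).symm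

theorem Monotone.map_partialSups {α β : Type*} [LinearOrder α] [LinearOrder β] {φ : α → β}
    (hφ : Monotone φ) (f : ℕ → α) (n : ℕ) : φ (partialSups f n) = partialSups (φ ∘ f) n := by
  induction n with
  | zero => simp
  | succ n ih => simp [hφ.map_sup, ih]

theorem tendsto_partialSups_atTop_ciSup {α : Type*} [ConditionallyCompleteLinearOrder α]
    [TopologicalSpace α] [OrderTopology α] {f : ℕ → α} (hf : BddAbove (Set.range f)) :
    Tendsto (partialSups f) atTop (𝓝 (⨆ i, f i)) := by
  simpa only [ciSup_partialSups_eq hf] using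
    tendsto_atTop_ciSup (partialSups f).monotone (bddAbove_range_partialSups.2 hf)

def partialInfs {α : Type*} [SemilatticeInf α] (f : ℕ → α) (n : ℕ) : α :=
  ofDual (partialSups (toDual ∘ f) n)

section PartialInfs

variable {α : Type*}

@[simp] theorem partialInfs_zero [SemilatticeInf α] (f : ℕ → α) : partialInfs f 0 = f 0 :=
  partialSups_zero (toDual ∘ f)

@[simp] theorem partialInfs_succ [SemilatticeInf α] (f : ℕ → α) (n : ℕ) :
    partialInfs f (n + 1) = partialInfs f n ⊓ f (n + 1) :=
  partialSups_succ (toDual ∘ f) n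

theorem partialInfs_le [SemilatticeInf α] (f : ℕ → α) {k n : ℕ} (h : k ≤ n) :
    partialInfs f n ≤ f k :=
  le_partialSups_of_le (toDual ∘ f) h

theorem le_partialInfs [SemilatticeInf α] {f : ℕ → α} {n : ℕ} {a : α} (h : ∀ k ≤ n, a ≤ f k) :
    a ≤ partialInfs f n :=
  partialSups_le (toDual ∘ f) n (toDual a) h

theorem antitone_partialInfs [SemilatticeInf α] (f : ℕ → α) : Antitone (partialInfs f) :=
  fun _ _ h => (partialSups (toDual ∘ f)).monotone h

theorem Monotone.map_partialInfs {β : Type*} [LinearOrder α] [LinearOrder β] {φ : α → β}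
    (hφ : Monotone φ) (f : ℕ → α) (n : ℕ) : φ (partialInfs f n) = partialInfs (φ ∘ f) n :=
  hφ.dual.map_partialSups (toDual ∘ f) n

theorem Filter.Tendsto.partialInfs_apply [SemilatticeInf α] [TopologicalSpace α]
    [ContinuousInf α] {ι : Type*} {l : Filter ι} {f : ℕ → ι → α} {g : ℕ → α} {n : ℕ}
    (hf : ∀ k ≤ n, Tendsto (f k) l (𝓝 (g k))) :
    Tendsto (fun x => partialInfs (f · x) n) l (𝓝 (partialInfs g n)) :=
  Tendsto.partialSups_apply (L := αᵒᵈ) hf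

theorem tendsto_partialInfs_atTop_ciInf [ConditionallyCompleteLinearOrder α] [TopologicalSpace α]
    [OrderTopology α] {f : ℕ → α} (hf : BddBelow (Set.range f)) :
    Tendsto (partialInfs f) atTop (𝓝 (⨅ i, f i)) :=
  tendsto_partialSups_atTop_ciSup (α := αᵒᵈ) hf

end PartialInfs

/-- If `A` is unbounded below, `⨅ i, A i` is the junk value `0`, and the truncation at `0` is what
makes the limit correct in that case. -/
theorem tendsto_zero_sup_partialInfs {A : ℕ → ℝ} (h0 : 0 ≤ ⨅ i, A i) :
    Tendsto (fun n => 0 ⊔ partialInfs A n) atTop (𝓝 (⨅ i, A i)) := by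
  by_cases hA : BddBelow (Set.range A)
  · have h := (tendsto_const_nhds (x := (0 : ℝ))).sup_nhds (tendsto_partialInfs_atTop_ciInf hA)
    rwa [sup_of_le_right h0] at h
  · obtain ⟨_, ⟨k, rfl⟩, hk⟩ := not_bddBelow_iff.1 hA 0
    rw [Real.iInf_of_not_bddBelow hA]
    refine tendsto_const_nhds.congr' (eventually_atTop.2 ⟨k, fun n hn => ?_⟩)
    exact (sup_of_le_left ((partialInfs_le A hn).trans hk.le)).symm

theorem iInf_iSup_eq_of_tendsto {α : Type*} [ConditionallyCompleteLinearOrder α]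
    [TopologicalSpace α] [OrderTopology α] {g : ℕ → ℕ → α} {a : ℕ → α} {x : α}
    (hg : ∀ i, Monotone (g i)) (hga : ∀ i, Tendsto (g i) atTop (𝓝 (a i)))
    (ha : Antitone a) (hax : Tendsto a atTop (𝓝 x)) :
    ⨅ i, ⨆ j, g i j = x := by
  simp_rw [(isLUB_of_tendsto_atTop (hg _) (hga _)).ciSup_eq]
  exact (isGLB_of_tendsto_atTop ha hax).ciInf_eq

def monotoneNormalForm {α : Type*} [Lattice α] [Zero α] (f : ℕ → ℕ → α) (i j : ℕ) : α :=
  0 ⊔ partialInfs (fun k => partialSups (f k) j) i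

section MonotoneNormalForm

variable {α : Type*}

theorem monotone_monotoneNormalForm [Lattice α] [Zero α] (f : ℕ → ℕ → α) (i : ℕ) :
    Monotone (monotoneNormalForm f i) := fun _ _ h =>
  sup_le_sup_left (le_partialInfs fun k hk =>
    (partialInfs_le _ hk).trans ((partialSups (f k)).monotone h)) 0

theorem Monotone.map_monotoneNormalForm {β : Type*} [LinearOrder α] [Zero α] [LinearOrder β]
    [Zero β] {φ : α → β} (hφ : Monotone φ) (hφ0 : φ 0 = 0) (f : ℕ → ℕ → α) (i j : ℕ) :
    φ (monotoneNormalForm f i j) = monotoneNormalForm (fun k l => φ (f k l)) i j := by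
  simp only [monotoneNormalForm, hφ.map_sup, hφ0, hφ.map_partialInfs]
  congr 2
  ext k
  exact hφ.map_partialSups (f k) j

theorem tendsto_monotoneNormalForm {f : ℕ → ℕ → ℝ} (hf : ∀ i, BddAbove (Set.range (f i)))
    (i : ℕ) : Tendsto (monotoneNormalForm f i) atTop
      (𝓝 (0 ⊔ partialInfs (fun k => ⨆ j, f k j) i)) :=
  tendsto_const_nhds.sup_nhds
    (Tendsto.partialInfs_apply fun k _ => tendsto_partialSups_atTop_ciSup (hf k))

variable {σ : Type*} [Primcodable α] [Primcodable σ]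

theorem Computable₂.nat_rec_fold {op : σ → σ → σ} {f : α → ℕ → σ} (hop : Computable₂ op)
    (hf : Computable₂ f) :
    Computable₂ fun a n =>
      Nat.rec (motive := fun _ => σ) (f a 0) (fun k r => op r (f a (k + 1))) n :=
  (Computable.nat_rec Computable.snd (hf.comp Computable.fst (Computable.const 0))
    (hop.comp (Computable.snd.comp Computable.snd) (hf.comp (Computable.fst.comp Computable.fst)
      (Computable.succ.comp (Computable.fst.comp Computable.snd)))).to₂).to₂

theorem Computable₂.partialSups [SemilatticeSup σ] {f : α → ℕ → σ}
    (hsup : Computable₂ ((· ⊔ ·) : σ → σ → σ)) (hf : Computable₂ f) :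
    Computable₂ fun a n => _root_.partialSups (f a) n := by
  refine (hsup.nat_rec_fold hf).of_eq fun p => ?_
  induction p.2 with
  | zero => simp
  | succ n ih => simp [ih]

theorem Computable₂.partialInfs [SemilatticeInf σ] {f : α → ℕ → σ}
    (hinf : Computable₂ ((· ⊓ ·) : σ → σ → σ)) (hf : Computable₂ f) :
    Computable₂ fun a n => _root_.partialInfs (f a) n := by
  refine (hinf.nat_rec_fold hf).of_eq fun p => ?_
  induction p.2 with
  | zero => simp
  | succ n ih => simp [ih]

theorem Computable₂.monotoneNormalForm [Lattice σ] [Zero σ] {f : ℕ → ℕ → σ}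
    (hsup : Computable₂ ((· ⊔ ·) : σ → σ → σ)) (hinf : Computable₂ ((· ⊓ ·) : σ → σ → σ))
    (hf : Computable₂ f) : Computable₂ (_root_.monotoneNormalForm f) := by
  have hcols := hinf.partialInfs (f := fun j k => _root_.partialSups (f k) j)
    ((hsup.partialSups hf).comp Computable.snd Computable.fst).to₂
  exact hsup.comp₂ (Computable.const 0).to₂ (hcols.comp Computable.snd Computable.fst).to₂

end MonotoneNormalForm

theorem pi2_monotone_normal_form_general (α : ℝ) (hα : Pi2Real α) (h0 : 0 ≤ α) :
    ∃ β : ℕ → ℕ → ℚ, Computable₂ β ∧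
      (∀ i, Monotone (β i)) ∧
      ∃ a : ℕ → ℝ,
        (∀ i, Tendsto (fun j => (β i j : ℝ)) atTop (nhds (a i))) ∧
        Antitone a ∧ Tendsto a atTop (nhds α) ∧
        α = ⨅ i, ⨆ j, (β i j : ℝ) := by
  obtain ⟨β, hβ, hbdd, rfl⟩ := hα
  set a : ℕ → ℝ := fun i => 0 ⊔ partialInfs (fun k => ⨆ j, (β k j : ℝ)) i
  have hrows : ∀ i, Tendsto (fun j => ((monotoneNormalForm β i j : ℚ) : ℝ)) atTop (𝓝 (a i)) :=
    fun i => by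
      simpa only [Rat.cast_mono.map_monotoneNormalForm Rat.cast_zero] using
        tendsto_monotoneNormalForm hbdd i
  have ha : Antitone a := fun _ _ h => sup_le_sup_left (antitone_partialInfs _ h) 0
  have hlim : Tendsto a atTop (𝓝 (⨅ i, ⨆ j, (β i j : ℝ))) := tendsto_zero_sup_partialInfs h0
  refine ⟨monotoneNormalForm β,
    Computable₂.monotoneNormalForm Primrec.rat_max.to_comp Primrec.rat_min.to_comp hβ,
    monotone_monotoneNormalForm β, a, hrows, ha, hlim, ?_⟩
  exact (iInf_iSup_eq_of_tendsto
    (fun i => Rat.cast_mono.comp (monotone_monotoneNormalForm β i)) hrows ha hlim).symm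

/-- Zheng–Weihrauch normal form: every `α ∈ Π₂ ∩ [0,1]` can be written as
`α = inf_i sup_j β_{i,j}` with `β` computable, each row `j ↦ β_{i,j}` nondecreasing with
limit `α_i`, and `i ↦ α_i` nonincreasing with limit `α`. -/
theorem pi2_monotone_normal_form (α : ℝ) (hα : Pi2Real α) (h0 : 0 ≤ α) (h1 : α ≤ 1) :
    ∃ β : ℕ → ℕ → ℚ, Computable₂ β ∧
      (∀ i, Monotone (β i)) ∧
      ∃ a : ℕ → ℝ,
        (∀ i, Tendsto (fun j => (β i j : ℝ)) atTop (nhds (a i))) ∧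
        Antitone a ∧ Tendsto a atTop (nhds α) ∧
        α = ⨅ i, ⨆ j, (β i j : ℝ) :=
  pi2_monotone_normal_form_general α hα h0
end

section
/- If X ⊆ A^Z is a Z-subshift with computable language, then for words u, v of equal length the inclusion E_X(u) ⊆ E_X(v) is a Π⁰₁ predicate: it holds iff for every finite word B containing u at a marked position, B ∈ L(X) implies the word obtained from B by replacing u with v is in L(X); and each instance of this condition is decidable. -/
open Filter Topology

/-- Glue a word `w` of length `n` onto the completion `x` outside `[0,n-1]`. -/
def glue {A : Type*} (n : ℕ) (w : Fin n → A) (x : ℤ → A) : ℤ → A :=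
  fun i => if h : 0 ≤ i ∧ i < (n : ℤ) then w ⟨i.toNat, by omega⟩ else x i

/-- The extender set of the word `w` in `X` (completions represented as total functions). -/
def extSet {A : Type*} (X : Set (ℤ → A)) {n : ℕ} (w : Fin n → A) : Set (ℤ → A) :=
  {x | glue n w x ∈ X}

/-- `w` appears in some configuration of `X`. -/
def inLang {A : Type*} (X : Set (ℤ → A)) {n : ℕ} (w : Fin n → A) : Prop :=
  ∃ x ∈ X, ∃ t : ℤ, ∀ k : Fin n, x (t + k) = w k

/-- The collection of extender sets of words of length `n` in the language of `X`. -/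
def extSets {A : Type*} (X : Set (ℤ → A)) (n : ℕ) : Set (Set (ℤ → A)) :=
  {E | ∃ w : Fin n → A, inLang X w ∧ E = extSet X w}

/-- A `ℤ`-subshift: a closed, shift-invariant subset of `A^ℤ`. -/
def IsSubshift {A : Type*} [TopologicalSpace A] (X : Set (ℤ → A)) : Prop :=
  IsClosed X ∧ ∀ x ∈ X, ∀ t : ℤ, (fun i => x (i + t)) ∈ X

/-- The sequence `n ↦ log |E_X(n)| / n` whose limit is the extender entropy. -/
noncomputable def extEnt {A : Type*} (X : Set (ℤ → A)) (n : ℕ) : ℝ :=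
  Real.log ((extSets X n).ncard) / n

/-- The word `w` occurs in the configuration `x`. -/
def listOccurs {B : Type*} (w : List B) (x : ℤ → B) : Prop :=
  ∃ t : ℤ, ∀ k : Fin w.length, x (t + k) = w.get k

/-- The word `w` belongs to the language of `X`. -/
def wordIn {A : Type*} (X : Set (ℤ → A)) (w : List A) : Prop :=
  ∃ x ∈ X, listOccurs w x

/-- Glue a word onto a completion outside `[0, w.length - 1]`. -/
def glueL {A : Type*} (w : List A) (x : ℤ → A) : ℤ → A :=
  fun i => if h : 0 ≤ i ∧ i < (w.length : ℤ) then w.get ⟨i.toNat, by omega⟩ else x i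

/-- The extender set of a word in `X`. -/
def extSetL {A : Type*} (X : Set (ℤ → A)) (w : List A) : Set (ℤ → A) :=
  {x | glueL w x ∈ X}

section Aux
variable {A : Type*}

lemma getTriple (l a r : List A) (k : ℕ) (hk : k < (l ++ a ++ r).length) :
    (l ++ a ++ r)[k] =
      if h : k < l.length then l[k]
      else if h2 : k < l.length + a.length then
        a[k - l.length]'(by omega)
      else r[k - l.length - a.length]'(by simp at hk; omega) := by
  simp only [List.length_append] at hk
  split_ifs with h h2
  · rw [List.getElem_append_left (by simp; omega), List.getElem_append_left h]
  · rw [List.getElem_append_left (by simp; omega),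
      List.getElem_append_right (by omega)]
  · rw [List.getElem_append_right (by simp; omega)]
    simp only [List.length_append]
    congr 1
    omega

lemma lenTriple (l a r : List A) : (l ++ a ++ r).length = l.length + a.length + r.length := by
  simp [List.length_append]; omega

end Aux

/-- For a `ℤ`-subshift with computable language, `E_X(u) ⊆ E_X(v)` is `Π⁰₁`:
it is equivalent to the universal finite-replacement condition, each instance of which is
decidable (computably, uniformly in the context). -/
theorem computable_language_extender_inclusion_pi1 {A : Type*} [Fintype A]
    [Primcodable A] [TopologicalSpace A] [DiscreteTopology A]
    (X : Set (ℤ → A)) (hX : IsSubshift X)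
    (hcomp : ∃ f : List A → Bool, Computable f ∧ ∀ w, f w = true ↔ wordIn X w)
    (u v : List A) (hlen : u.length = v.length) :
    (extSetL X u ⊆ extSetL X v ↔
      ∀ l r : List A, wordIn X (l ++ u ++ r) → wordIn X (l ++ v ++ r)) ∧
    ∃ g : List A × List A → Bool, Computable g ∧
      ∀ l r : List A,
        (g (l, r) = true ↔ (wordIn X (l ++ u ++ r) → wordIn X (l ++ v ++ r))) := by
  obtain ⟨f, hfc, hf⟩ := hcomp
  constructor
  · constructor
    · -- semantic ⊆ implies syntactic condition
      rintro hsub l r ⟨x, hxX, t, hocc⟩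
      have hocc' : ∀ (j : ℕ) (hj : j < (l ++ u ++ r).length),
          x (t + j) = (l ++ u ++ r)[j] := fun j hj => hocc ⟨j, hj⟩
      set x' : ℤ → A := fun i => x (i + (t + l.length)) with hx'
      have hx'X : x' ∈ X := hX.2 x hxX (t + l.length)
      have hLu := lenTriple l u r
      have hLv := lenTriple l v r
      have hux' : glueL u x' = x' := by
        funext i
        simp only [glueL]
        split_ifs with h
        · have hkey := hocc' (l.length + i.toNat) (by omega)
          rw [getTriple, dif_neg (by omega), dif_pos (by omega)] at hkey
          have hidx : l.length + i.toNat - l.length = i.toNat := by omega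
          simp only [hidx] at hkey
          rw [List.get_eq_getElem, ← hkey]
          simp only [hx']
          congr 1
          push_cast
          omega
        · rfl
      have hx'u : x' ∈ extSetL X u := by
        show glueL u x' ∈ X
        rw [hux']
        exact hx'X
      have hvx' : glueL v x' ∈ X := hsub hx'u
      refine ⟨glueL v x', hvx', -(l.length : ℤ), ?_⟩
      intro k
      have hk : (k : ℕ) < l.length + v.length + r.length := by
        have := k.2; omega
      rw [List.get_eq_getElem, getTriple _ _ _ _ k.2]
      split_ifs with h h2
      · -- in l part
        simp only [glueL]
        rw [dif_neg (by push_cast; omega)]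
        have hkey := hocc' k (by omega)
        rw [getTriple, dif_pos h] at hkey
        rw [← hkey]
        simp only [hx']
        congr 1
        push_cast
        omega
      · -- in v part
        simp only [glueL]
        rw [dif_pos (by push_cast; omega)]
        rw [List.get_eq_getElem]
        have hidx : (-(l.length : ℤ) + k).toNat = (k : ℕ) - l.length := by omega
        simp only [hidx]
      · -- in r part
        simp only [glueL]
        rw [dif_neg (by push_cast; omega)]
        have hkey := hocc' k (by omega)
        rw [getTriple, dif_neg h, dif_neg (by omega)] at hkey
        have hidx : (k : ℕ) - l.length - v.length = (k : ℕ) - l.length - u.length := by omega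
        simp only [hidx]
        rw [← hkey]
        simp only [hx']
        congr 1
        push_cast
        omega
    · -- syntactic condition implies semantic ⊆
      intro hcond x hxu
      set n := u.length with hn
      have hy : glueL u x ∈ X := hxu
      show glueL v x ∈ X
      set y := glueL u x with hydef
      set w := glueL v x with hwdef
      have hyw : ∀ i : ℤ, (i < 0 ∨ (n : ℤ) ≤ i) → y i = w i := by
        intro i hi
        simp only [hydef, hwdef, glueL]
        rw [dif_neg (by omega), dif_neg (by omega)]
      have hzex : ∀ N : ℕ, ∃ z ∈ X, ∀ i : ℤ, -(N:ℤ) ≤ i → i < (n:ℤ) + N → z i = w i := by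
        intro N
        set l : List A := List.ofFn (fun k : Fin N => y ((k : ℤ) - N)) with hl
        set r : List A := List.ofFn (fun k : Fin N => y ((n : ℤ) + k)) with hr
        have hll : l.length = N := by simp [hl]
        have hrl : r.length = N := by simp [hr]
        have hget : ∀ (a : List A) (ha : a.length = n) (k : ℕ)
            (hk : k < (l ++ a ++ r).length),
            (l ++ a ++ r)[k] =
              (if h : N ≤ k ∧ k < N + n then a[k - N]'(by omega)
               else y ((k : ℤ) - N)) := by
          intro a ha k hk
          have hk' := hk
          rw [lenTriple, hll, hrl, ha] at hk'
          rw [getTriple]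
          by_cases h : N ≤ k ∧ k < N + n
          · rw [dif_pos h, dif_neg (by omega), dif_pos (by omega)]
            simp only [hll]
          · rw [dif_neg h]
            by_cases h1 : k < N
            · rw [dif_pos (by omega)]
              simp only [hl, List.getElem_ofFn]
            · rw [dif_neg (by omega), dif_neg (by omega)]
              simp only [hr, List.getElem_ofFn]
              congr 1
              simp only [hll, ha]
              omega
        have hu_in : wordIn X (l ++ u ++ r) := by
          refine ⟨y, hy, -(N:ℤ), ?_⟩
          intro k
          rw [List.get_eq_getElem, hget u rfl k k.2]
          split_ifs with h
          · simp only [hydef, glueL]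
            rw [dif_pos ⟨by omega, by push_cast; omega⟩]
            rw [List.get_eq_getElem]
            have hidx : (-(N:ℤ) + k).toNat = (k : ℕ) - N := by omega
            simp only [hidx]
          · have hk : (k : ℕ) < N + n + N := by
              have h2 := k.2
              have := lenTriple l u r
              omega
            congr 1
            push_cast
            omega
        obtain ⟨z, hzX, t, hocc⟩ := hcond l r hu_in
        have hocc' : ∀ (j : ℕ) (hj : j < (l ++ v ++ r).length),
            z (t + j) = (l ++ v ++ r)[j] := fun j hj => hocc ⟨j, hj⟩
        refine ⟨fun i => z (i + (t + N)), hX.2 z hzX (t + N), ?_⟩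
        intro i hi1 hi2
        have hlb : (i + (N:ℤ)).toNat < (l ++ v ++ r).length := by
          rw [lenTriple, hll, hrl]
          omega
        have hkey := hocc' (i + N).toNat hlb
        rw [hget v hlen.symm _ hlb] at hkey
        have ht : z (t + ((i + (N:ℤ)).toNat : ℤ)) = z (i + (t + N)) := by
          congr 1; omega
        rw [ht] at hkey
        show z (i + (t + (N:ℤ))) = w i
        rw [hkey]
        split_ifs with h
        · simp only [hwdef, glueL]
          rw [dif_pos ⟨by omega, by omega⟩]
          rw [List.get_eq_getElem]
          have hidx : ((((i + (N:ℤ)).toNat - N : ℕ) : ℤ)).toNat = (i + (N:ℤ)).toNat - N := by omega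
          have hidx2 : (i + (N:ℤ)).toNat - N = i.toNat := by omega
          simp only [hidx2]
        · have hidx : (((i + (N:ℤ)).toNat : ℤ)) - N = i := by omega
          rw [hidx]
          exact hyw i (by omega)
      choose z hzX hzag using hzex
      have htend : Filter.Tendsto z Filter.atTop (nhds w) := by
        rw [tendsto_pi_nhds]
        intro i
        have hev : ∀ᶠ N in Filter.atTop, z N i = w i := by
          filter_upwards [Filter.eventually_ge_atTop (i.natAbs + n + 1)] with N hN
          exact hzag N i (by omega) (by omega)
        exact Filter.Tendsto.congr'
          (by filter_upwards [hev] with N hN; exact hN.symm) tendsto_const_nhds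
      exact hX.1.mem_of_tendsto htend (Filter.Eventually.of_forall hzX)
  · -- computable side
    refine ⟨fun p => bif f (p.1 ++ u ++ p.2) then f (p.1 ++ v ++ p.2) else true, ?_, ?_⟩
    · have happ : ∀ m : List A, Computable (fun p : List A × List A => p.1 ++ m ++ p.2) := by
        intro m
        exact Primrec.to_comp
          ((Primrec.list_append.comp
            (Primrec.list_append.comp Primrec.fst (Primrec.const m)) Primrec.snd))
      exact Computable.cond (hfc.comp (happ u)) (hfc.comp (happ v)) (Computable.const true)
    · intro l r
      simp only
      rcases h1 : f (l ++ u ++ r) with _ | _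
      · simp only [cond_false, true_iff]
        intro hw
        have := (hf (l ++ u ++ r)).mpr hw
        rw [h1] at this
        exact absurd this (by simp)
      · simp only [cond_true]
        rw [hf]
        constructor
        · intro h _; exact h
        · intro h; exact h ((hf _).mp h1)
end
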